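/- arXiv:1409.3810 — 2 statements merged into one kernel-verified Lean document; each statement's English description precedes it below -/
import Mathlib

section
/- Let H be a Hilbert space and μ a positive operator-valued Borel measure on 𝔻 with finite Carleson intensity ‖μ‖_C = sup_I ‖μ(Q_I)‖/A(Q_I) < ∞. Then for every f ∈ L²(H, dA), Σ_{I dyadic} ⟨μ(T_I)(1/A(T_I) ∫_{T_I} f dA), (1/A(T_I) ∫_{T_I} f dA)⟩ ≤ C·‖μ‖_C·∫_𝔻 ‖f‖² dA, where C is an absolute constant independent of the dimension of H. -/
open MeasureTheory Metric Complex Set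
open scoped ENNReal NNReal InnerProductSpace

noncomputable section

/-- Normalized Lebesgue area measure on the unit disc. -/
def areaM : Measure ℂ := (ENNReal.ofReal Real.pi)⁻¹ • (volume.restrict (ball (0:ℂ) 1))

/-- The dyadic arc of level `n`, index `k` (half-open parametrization). -/
def dyadicArc (n k : ℕ) : Set ℂ :=
  {z | ∃ t : ℝ, 2 * Real.pi * k / 2 ^ n ≤ t ∧ t < 2 * Real.pi * (k + 1) / 2 ^ n ∧
    z = Complex.exp (t * Complex.I)}

/-- The Carleson square over the dyadic arc of level `n`, index `k`. -/
def carlesonBox (n k : ℕ) : Set ℂ :=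
  {z | ‖z‖ < 1 ∧ (z / (‖z‖ : ℂ)) ∈ dyadicArc n k ∧ 1 - 1 / 2 ^ n ≤ ‖z‖}

/-- The top half of the Carleson square. -/
def topHalf (n k : ℕ) : Set ℂ :=
  {z | z ∈ carlesonBox n k ∧ ‖z‖ < 1 - 1 / 2 ^ (n + 1)}

/-- The disc `D_{z,r}` of radius `r(1-|z|)` centered at `z`, inside the unit disc. -/
def discAt (z : ℂ) (r : ℝ) : Set ℂ :=
  {ζ : ℂ | ‖ζ‖ < 1 ∧ ‖ζ - z‖ < r * (1 - ‖z‖)}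

/-!
For a top half `T ⊆ Q` and the average `x` of `f` over `T`, positivity and countable
additivity of `μ` give `⟨μ(T)x, x⟩ ≤ ⟨μ(Q)x, x⟩ ≤ ‖μ(Q)‖ ‖x‖² ≤ c A(Q) ‖x‖²`, while Jensen's
inequality gives `A(T) ‖x‖² ≤ ∫_T ‖f‖²`. The square `Q` of level `n` lies in a disc of radius
`8 · 2⁻ⁿ` and `T` contains a disc of radius `2⁻ⁿ / 8`, so `A(Q) ≤ 64² A(T)`. Summing over the
pairwise disjoint top halves gives the bound with `C = 4096`, whatever the dimension of `H`.
-/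

section OperatorValued

variable {α : Type*} [MeasurableSpace α]

def IsStronglyCountablyAdditive {𝕜 E F : Type*} [NontriviallyNormedField 𝕜]
    [NormedAddCommGroup E] [NormedSpace 𝕜 E] [NormedAddCommGroup F] [NormedSpace 𝕜 F]
    (μ : Set α → E →L[𝕜] F) : Prop :=
  ∀ s : ℕ → Set α, (∀ i, MeasurableSet (s i)) → Pairwise (Function.onFun Disjoint s) →
    ∀ e : E, HasSum (fun i => μ (s i) e) (μ (⋃ i, s i) e)

namespace IsStronglyCountablyAdditive

variable {𝕜 E F : Type*} [NontriviallyNormedField 𝕜] [NormedAddCommGroup E] [NormedSpace 𝕜 E]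
  [NormedAddCommGroup F] [NormedSpace 𝕜 F] {μ : Set α → E →L[𝕜] F} (hμ : IsStronglyCountablyAdditive μ)
include hμ

lemma apply_empty (e : E) : μ ∅ e = 0 := by
  have h := hμ (fun _ => ∅) (fun _ => .empty) (fun _ _ _ => disjoint_bot_left) e
  exact tendsto_nhds_unique tendsto_const_nhds h.summable.tendsto_atTop_zero

open Classical in
def vectorMeasure (e : E) : VectorMeasure α F where
  measureOf' s := if MeasurableSet s then μ s e else 0
  empty' := by simp [hμ.apply_empty]
  not_measurable' s hs := if_neg hs
  m_iUnion' s hs hd := by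
    simpa only [if_pos (hs _), if_pos (MeasurableSet.iUnion hs)] using hμ s hs hd e

lemma apply_add_apply_sdiff {S T : Set α} (hS : MeasurableSet S) (hT : MeasurableSet T)
    (hST : S ⊆ T) (e : E) : μ S e + μ (T \ S) e = μ T e := by
  simpa [vectorMeasure, hS, hT, hT.diff hS] using
    (hμ.vectorMeasure e).of_add_of_sdiff hS hT hST

end IsStronglyCountablyAdditive

variable {𝕜 E : Type*} [RCLike 𝕜] [NormedAddCommGroup E] [InnerProductSpace 𝕜 E]
  {μ : Set α → E →L[𝕜] E}

lemma reApplyInnerSelf_mono_of_isPositive (hμ : IsStronglyCountablyAdditive μ)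
    (hpos : ∀ s, (μ s).IsPositive) {S T : Set α} (hS : MeasurableSet S) (hT : MeasurableSet T)
    (hST : S ⊆ T) (x : E) : (μ S).reApplyInnerSelf x ≤ (μ T).reApplyInnerSelf x := by
  have hsplit : (μ T).reApplyInnerSelf x
      = (μ S).reApplyInnerSelf x + (μ (T \ S)).reApplyInnerSelf x := by
    simp only [ContinuousLinearMap.reApplyInnerSelf_apply,
      ← hμ.apply_add_apply_sdiff hS hT hST x, inner_add_left, map_add]
  linarith [(hpos (T \ S)).2 x]

end OperatorValued

lemma ContinuousLinearMap.reApplyInnerSelf_le_norm_mul_sq {𝕜 E : Type*} [RCLike 𝕜]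
    [NormedAddCommGroup E] [InnerProductSpace 𝕜 E] (A : E →L[𝕜] E) (x : E) :
    A.reApplyInnerSelf x ≤ ‖A‖ * ‖x‖ ^ 2 :=
  calc A.reApplyInnerSelf x ≤ ‖A x‖ * ‖x‖ :=
        (RCLike.re_le_norm _).trans (norm_inner_le_norm _ _)
    _ ≤ ‖A‖ * ‖x‖ * ‖x‖ := by gcongr; exact A.le_opNorm x
    _ = ‖A‖ * ‖x‖ ^ 2 := by ring

lemma sq_norm_setAverage_le {α E : Type*} [MeasurableSpace α] {ν : Measure α}
    [NormedAddCommGroup E] [NormedSpace ℝ E] [CompleteSpace E] {f : α → E} {t : Set α}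
    (h0 : ν t ≠ 0) (ht : ν t ≠ ∞) (hf : MemLp f 2 (ν.restrict t)) :
    ‖⨍ x in t, f x ∂ν‖ ^ 2 ≤ ⨍ x in t, ‖f x‖ ^ 2 ∂ν := by
  have : IsFiniteMeasure (ν.restrict t) := isFiniteMeasure_restrict.2 ht
  exact (convexOn_univ_norm.pow (fun _ _ => norm_nonneg _) 2).map_set_average_le
    (by fun_prop) isClosed_univ h0 ht (by simp) (hf.integrable one_le_two)
    hf.integrable_norm_pow'

lemma reApplyInnerSelf_setAverage_le {α E : Type*} [MeasurableSpace α] {ν : Measure α}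
    [NormedAddCommGroup E] [InnerProductSpace ℂ E] [CompleteSpace E] {μ : Set α → E →L[ℂ] E}
    (hμ : IsStronglyCountablyAdditive μ) (hpos : ∀ s, (μ s).IsPositive) {T Q : Set α}
    (hT : MeasurableSet T) (hQ : MeasurableSet Q) (hTQ : T ⊆ Q) {c K : ℝ} (hc : 0 ≤ c)
    (hμQ : ‖μ Q‖ ≤ c * ν.real Q) (hνQ : ν.real Q ≤ K * ν.real T) (h0 : ν T ≠ 0)
    (hfin : ν T ≠ ∞) {f : α → E} (hf : MemLp f 2 (ν.restrict T)) :
    (μ T).reApplyInnerSelf (⨍ x in T, f x ∂ν) ≤ K * c * ∫ x in T, ‖f x‖ ^ 2 ∂ν := by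
  have hνT : ν.real T ≠ 0 := (ENNReal.toReal_pos h0 hfin).ne'
  have hKT : 0 ≤ K * ν.real T := measureReal_nonneg.trans hνQ
  calc (μ T).reApplyInnerSelf (⨍ x in T, f x ∂ν)
      ≤ (μ Q).reApplyInnerSelf (⨍ x in T, f x ∂ν) :=
        reApplyInnerSelf_mono_of_isPositive hμ hpos hT hQ hTQ _
    _ ≤ ‖μ Q‖ * ‖⨍ x in T, f x ∂ν‖ ^ 2 := (μ Q).reApplyInnerSelf_le_norm_mul_sq _
    _ ≤ c * (K * ν.real T) * ⨍ x in T, ‖f x‖ ^ 2 ∂ν := by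
        gcongr
        · exact hμQ.trans (by gcongr)
        · exact sq_norm_setAverage_le h0 hfin hf
    _ = K * c * ∫ x in T, ‖f x‖ ^ 2 ∂ν := by
        rw [setAverage_eq, smul_eq_mul]; field_simp

lemma tsum_le_mul_integral_of_le_mul_setIntegral {ι α : Type*} [MeasurableSpace α]
    {ν : Measure α} {s : ι → Set α} (hs : ∀ i, MeasurableSet (s i))
    (hd : Pairwise (Function.onFun Disjoint s)) {g : α → ℝ} (hg : Integrable g ν) (hg0 : 0 ≤ g)
    {C : ℝ} (hC : 0 ≤ C) {q : ι → ℝ} (hq : ∀ i, q i ≤ C * ∫ x in s i, g x ∂ν) :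
    ∑' i, q i ≤ C * ∫ x, g x ∂ν := by
  refine tsum_le_of_sum_le' (mul_nonneg hC (integral_nonneg hg0)) fun F => ?_
  calc ∑ i ∈ F, q i ≤ ∑ i ∈ F, C * ∫ x in s i, g x ∂ν := Finset.sum_le_sum fun i _ => hq i
    _ = C * ∫ x in ⋃ i ∈ F, s i, g x ∂ν := by
        rw [← Finset.mul_sum, integral_biUnion_finset F (fun i _ => hs i)
          (fun i _ j _ hij => hd hij) (fun i _ => hg.integrableOn)]
    _ ≤ C * ∫ x, g x ∂ν :=
        mul_le_mul_of_nonneg_left (setIntegral_le_integral hg (.of_forall hg0)) hC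

lemma Nat.floor_div_eq_of_mem_Ico {c t : ℝ} (hc : 0 < c) {k : ℕ}
    (ht : t ∈ Ico (c * k) (c * (k + 1))) : ⌊t / c⌋₊ = k := by
  rw [Nat.floor_eq_iff (div_nonneg (le_trans (by positivity) ht.1) hc.le),
    le_div_iff₀ hc, div_lt_iff₀ hc]
  constructor <;> linarith [ht.1, ht.2]

namespace Complex

lemma injOn_exp_mul_I_Ico {a b : ℝ} (h : b - a ≤ 2 * Real.pi) :
    InjOn (fun t : ℝ => cexp (t * I)) (Ico a b) :=
  Subtype.val_injective.comp_injOn (Circle.exp_injOn_Ico h)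

lemma norm_sub_div_norm_le (z : ℂ) : ‖z - z / ‖z‖‖ ≤ |1 - ‖z‖| := by
  rcases eq_or_ne z 0 with rfl | hz
  · simp
  have hz' : (‖z‖ : ℂ) ≠ 0 := by exact_mod_cast norm_ne_zero_iff.2 hz
  rw [show z - z / ‖z‖ = ((‖z‖ - 1 : ℝ) : ℂ) * (z / ‖z‖) by push_cast; field_simp,
    norm_mul, norm_div, norm_real, norm_real, norm_norm, div_self (norm_ne_zero_iff.2 hz),
    mul_one, Real.norm_eq_abs, abs_sub_comm]

lemma norm_exp_mul_I_sub_exp_mul_I_le (s t : ℝ) : ‖cexp (s * I) - cexp (t * I)‖ ≤ |s - t| := by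
  rw [show cexp (s * I) - cexp (t * I) = cexp (t * I) * (cexp (I * (s - t : ℝ)) - 1) by
    rw [mul_sub, mul_one, ← exp_add]; push_cast; ring_nf]
  rw [norm_mul, norm_exp_ofReal_mul_I, one_mul, ← Real.norm_eq_abs]
  exact Real.norm_exp_I_mul_ofReal_sub_one_le

lemma abs_arg_le_of_norm_sub_one_le {w : ℂ} (h : ‖w - 1‖ ≤ 1 / 2) :
    |arg w| ≤ 3 / 2 * ‖w - 1‖ := by
  have hlog := norm_log_one_add_half_le_self h
  rw [add_sub_cancel] at hlog
  calc |arg w| = |(log w).im| := by rw [log_im]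
    _ ≤ ‖log w‖ := abs_im_le_norm _
    _ ≤ 3 / 2 * ‖w - 1‖ := hlog

lemma div_norm_eq_exp_arg_mul_I {z : ℂ} (hz : z ≠ 0) : z / ‖z‖ = cexp (arg z * I) := by
  rw [div_eq_iff (by exact_mod_cast norm_ne_zero_iff.2 hz), mul_comm]
  exact (norm_mul_exp_arg_mul_I z).symm

lemma exists_div_norm_eq_exp_mul_I {r m : ℝ} {ζ : ℂ} (hr : 0 < r)
    (h : ‖ζ - r * cexp (m * I)‖ ≤ r / 2) :
    ∃ t : ℝ, |t - m| ≤ 3 / 2 * (‖ζ - r * cexp (m * I)‖ / r) ∧ ζ / ‖ζ‖ = cexp (t * I) := by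
  set z₀ : ℂ := r * cexp (m * I)
  have hz₀ : ‖z₀‖ = r := by
    rw [norm_mul, norm_real, norm_exp_ofReal_mul_I, mul_one, Real.norm_of_nonneg hr.le]
  have hz₀0 : z₀ ≠ 0 := norm_pos_iff.1 (hz₀ ▸ hr)
  set w := ζ / z₀
  have hw1 : ‖w - 1‖ = ‖ζ - z₀‖ / r := by
    rw [← hz₀, ← norm_div, sub_div, div_self hz₀0]
  have hw1' : ‖w - 1‖ ≤ 1 / 2 := by
    rw [hw1, div_le_iff₀ hr]; linarith
  have hw0 : w ≠ 0 := by
    rintro hw; rw [hw] at hw1'; norm_num at hw1'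
  refine ⟨m + arg w, ?_, ?_⟩
  · rw [add_sub_cancel_left, ← hw1]
    exact abs_arg_le_of_norm_sub_one_le hw1'
  · have hζ : ζ = z₀ * w := by rw [mul_div_cancel₀ _ hz₀0]
    rw [hζ, norm_mul, hz₀, ofReal_mul, mul_div_mul_comm, div_norm_eq_exp_arg_mul_I hw0,
      mul_div_cancel_left₀ _ (ofReal_ne_zero.2 hr.ne'), ofReal_add, add_mul, exp_add]

end Complex

lemma MeasureTheory.Measure.addHaar_le_of_subset_ball_of_ball_subset {E : Type*}
    [NormedAddCommGroup E] [NormedSpace ℝ E] [MeasurableSpace E] [BorelSpace E]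
    [FiniteDimensional ℝ E] [Nontrivial E]
    (μ : Measure E) [μ.IsAddHaarMeasure] {s t : Set E} {x y : E} {R r : ℝ} (hr : 0 < r)
    (hs : s ⊆ ball x R) (ht : ball y r ⊆ t) :
    μ s ≤ ENNReal.ofReal ((R / r) ^ Module.finrank ℝ E) * μ t := by
  rcases lt_or_ge R 0 with hR | hR
  · simp [subset_empty_iff.1 (hs.trans (ball_eq_empty.2 hR.le).subset)]
  calc μ s ≤ μ (ball x (R / r * r)) := measure_mono (by rwa [div_mul_cancel₀ _ hr.ne'])
    _ = ENNReal.ofReal ((R / r) ^ Module.finrank ℝ E) * μ (ball y r) := by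
        rw [Measure.addHaar_ball_mul μ x (by positivity), Measure.addHaar_ball_center,
          ← Measure.addHaar_ball_center μ y]
    _ ≤ ENNReal.ofReal ((R / r) ^ Module.finrank ℝ E) * μ t := by gcongr

lemma dyadicArc_eq_image (n k : ℕ) :
    dyadicArc n k = (fun t : ℝ => cexp (t * I)) ''
      Ico (2 * Real.pi / 2 ^ n * k) (2 * Real.pi / 2 ^ n * (k + 1)) := by
  ext z
  simp only [dyadicArc, mem_ofPred_eq, mem_image, mem_Ico, and_assoc, eq_comm (a := z),
    div_mul_eq_mul_div]

lemma Ico_dyadic_subset_Ico_zero_two_pi {n k : ℕ} (hk : k < 2 ^ n) :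
    Ico (2 * Real.pi / 2 ^ n * k) (2 * Real.pi / 2 ^ n * (k + 1)) ⊆ Ico 0 (2 * Real.pi) := by
  have hk' : (k : ℝ) + 1 ≤ 2 ^ n := by exact_mod_cast hk
  refine Ico_subset_Ico (by positivity) ?_
  calc 2 * Real.pi / 2 ^ n * (k + 1) ≤ 2 * Real.pi / 2 ^ n * 2 ^ n := by gcongr
    _ = 2 * Real.pi := by field_simp

lemma measurableSet_dyadicArc (n k : ℕ) : MeasurableSet (dyadicArc n k) := by
  rw [dyadicArc_eq_image]
  refine measurableSet_Ico.image_of_continuousOn_injOn (by fun_prop) (injOn_exp_mul_I_Ico ?_)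
  rw [← mul_sub, add_sub_cancel_left, mul_one, div_le_iff₀ (by positivity)]
  nlinarith [Real.pi_pos, one_le_pow₀ (M₀ := ℝ) (a := 2) (n := n) (by norm_num)]

lemma measurableSet_carlesonBox (n k : ℕ) : MeasurableSet (carlesonBox n k) :=
  (measurableSet_lt measurable_norm measurable_const).inter
    (((measurableSet_dyadicArc n k).preimage (by fun_prop)).inter
      (measurableSet_le measurable_const measurable_norm))

lemma measurableSet_topHalf (n k : ℕ) : MeasurableSet (topHalf n k) :=
  (measurableSet_carlesonBox n k).inter (measurableSet_lt measurable_norm measurable_const)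

lemma pairwise_disjoint_dyadicArc (n : ℕ) :
    Pairwise (Function.onFun Disjoint fun k : Fin (2 ^ n) => dyadicArc n k) := by
  intro k₁ k₂ hne
  refine Set.disjoint_left.2 fun z hz₁ hz₂ => hne (Fin.ext ?_)
  dsimp only at hz₁ hz₂
  rw [dyadicArc_eq_image] at hz₁ hz₂
  obtain ⟨t₁, ht₁, rfl⟩ := hz₁
  obtain ⟨t₂, ht₂, heq⟩ := hz₂
  have ht : t₂ = t₁ := injOn_exp_mul_I_Ico (by simp) (Ico_dyadic_subset_Ico_zero_two_pi k₂.isLt ht₂)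
    (Ico_dyadic_subset_Ico_zero_two_pi k₁.isLt ht₁) heq
  have hc : 0 < 2 * Real.pi / 2 ^ n := by positivity
  rw [← Nat.floor_div_eq_of_mem_Ico hc ht₁, ← Nat.floor_div_eq_of_mem_Ico hc ht₂, ht]

lemma level_eq_of_mem_topHalf {z : ℂ} {n₁ n₂ k₁ k₂ : ℕ} (h₁ : z ∈ topHalf n₁ k₁)
    (h₂ : z ∈ topHalf n₂ k₂) : n₁ = n₂ := by
  have not_lt_of_mem :
      ∀ {m₁ m₂ j₁ j₂ : ℕ}, z ∈ topHalf m₁ j₁ → z ∈ topHalf m₂ j₂ → ¬ m₁ < m₂ := by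
    intro m₁ m₂ j₁ j₂ h₁ h₂ hlt
    have : (1 : ℝ) / 2 ^ m₂ ≤ 1 / 2 ^ (m₁ + 1) :=
      one_div_pow_le_one_div_pow_of_le (by norm_num) hlt
    linarith [h₁.2, h₂.1.2.2]
  exact le_antisymm (not_lt.1 (not_lt_of_mem h₂ h₁)) (not_lt.1 (not_lt_of_mem h₁ h₂))

lemma pairwise_disjoint_topHalf :
    Pairwise (Function.onFun Disjoint fun p : (Σ n : ℕ, Fin (2 ^ n)) => topHalf p.1 p.2) := by
  rintro ⟨n₁, k₁⟩ ⟨n₂, k₂⟩ hne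
  refine Set.disjoint_left.2 fun z hz₁ hz₂ => ?_
  obtain rfl := level_eq_of_mem_topHalf hz₁ hz₂
  obtain rfl : k₁ = k₂ := by
    by_contra hk
    exact Set.disjoint_left.1 (pairwise_disjoint_dyadicArc n₁ hk) hz₁.1.2.1 hz₂.1.2.1
  exact hne rfl

lemma carlesonBox_subset_ball (n k : ℕ) :
    carlesonBox n k ⊆ ball (cexp ((2 * Real.pi / 2 ^ n * k : ℝ) * I)) (8 / 2 ^ n) := by
  rintro z ⟨hz1, hzarc, hz3⟩
  rw [dyadicArc_eq_image] at hzarc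
  obtain ⟨t, ⟨ht1, ht2⟩, hzt⟩ := hzarc
  rw [mem_ball, dist_eq_norm]
  have hpi := Real.pi_lt_d2
  calc ‖z - cexp ((2 * Real.pi / 2 ^ n * k : ℝ) * I)‖
      ≤ ‖z - z / ‖z‖‖ + ‖cexp (t * I) - cexp ((2 * Real.pi / 2 ^ n * k : ℝ) * I)‖ := by
        rw [← hzt]; exact norm_sub_le_norm_sub_add_norm_sub _ _ _
    _ ≤ |1 - ‖z‖| + |t - 2 * Real.pi / 2 ^ n * k| :=
        add_le_add (norm_sub_div_norm_le z) (norm_exp_mul_I_sub_exp_mul_I_le _ _)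
    _ = (1 - ‖z‖) + (t - 2 * Real.pi / 2 ^ n * k) := by
        rw [abs_of_nonneg (by linarith), abs_of_nonneg (by linarith)]
    _ < 1 / 2 ^ n + 2 * Real.pi / 2 ^ n := by linarith
    _ ≤ 8 / 2 ^ n := by rw [← add_div]; gcongr; linarith

lemma ball_subset_topHalf (n k : ℕ) :
    ball (((1 - 3 / 4 / 2 ^ n : ℝ) : ℂ) * cexp ((2 * Real.pi / 2 ^ n * (k + 1 / 2) : ℝ) * I))
      (1 / 2 ^ n / 8) ⊆ topHalf n k := by
  intro ζ hζ
  rw [mem_ball, dist_eq_norm] at hζ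
  set e : ℝ := 1 / 2 ^ n
  have he : 0 < e := by positivity
  have he1 : e ≤ 1 := div_le_one_of_le₀ (one_le_pow₀ (by norm_num)) (by positivity)
  set r₀ : ℝ := 1 - 3 / 4 / 2 ^ n
  have hr₀ : r₀ = 1 - 3 / 4 * e := by simp only [r₀, e]; ring
  set m : ℝ := 2 * Real.pi / 2 ^ n * (k + 1 / 2)
  have hnorm : |‖ζ‖ - r₀| < e / 8 := by
    have := abs_norm_sub_norm_le ζ (r₀ * cexp (m * I))
    rw [norm_mul, norm_real, norm_exp_ofReal_mul_I, mul_one,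
      Real.norm_of_nonneg (by linarith)] at this
    linarith
  obtain ⟨hlow, hup⟩ := abs_lt.1 hnorm
  obtain ⟨t, ht, hζt⟩ :=
    exists_div_norm_eq_exp_mul_I (r := r₀) (m := m) (ζ := ζ) (by linarith) (by linarith)
  have htm : |t - m| < Real.pi * e := by
    calc |t - m| ≤ 3 / 2 * (‖ζ - r₀ * cexp (m * I)‖ / r₀) := ht
      _ ≤ 3 / 2 * (e / 8 / (1 / 4)) := by gcongr; linarith
      _ < Real.pi * e := by nlinarith [Real.pi_gt_three]
  obtain ⟨htl, htu⟩ := abs_lt.1 htm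
  have hlow_arc : 2 * Real.pi / 2 ^ n * k = m - Real.pi * e := by
    simp only [m, e]; ring
  have hup_arc : 2 * Real.pi / 2 ^ n * (k + 1) = m + Real.pi * e := by
    simp only [m, e]; ring
  have hhalf : (1 : ℝ) / 2 ^ (n + 1) = e / 2 := by simp only [e]; ring
  refine ⟨⟨by linarith, ?_, by linarith⟩, by linarith⟩
  rw [dyadicArc_eq_image]
  exact ⟨t, ⟨by linarith, by linarith⟩, hζt.symm⟩

lemma topHalf_subset_ball_zero_one (n k : ℕ) : topHalf n k ⊆ ball (0 : ℂ) 1 :=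
  fun _ hz => mem_ball_zero_iff.2 hz.1.1

lemma carlesonBox_subset_ball_zero_one (n k : ℕ) : carlesonBox n k ⊆ ball (0 : ℂ) 1 :=
  fun _ hz => mem_ball_zero_iff.2 hz.1

lemma areaM_apply_of_subset {s : Set ℂ} (hs : s ⊆ ball 0 1) :
    areaM s = (ENNReal.ofReal Real.pi)⁻¹ * volume s := by
  rw [areaM, Measure.smul_apply, Measure.restrict_eq_self _ hs, smul_eq_mul]

instance : IsFiniteMeasure areaM :=
  ⟨by rw [areaM, Measure.smul_apply, Measure.restrict_apply_univ, smul_eq_mul]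
      exact ENNReal.mul_lt_top (by simp [Real.pi_pos]) measure_ball_lt_top⟩

lemma areaM_carlesonBox_le (n k : ℕ) :
    areaM.real (carlesonBox n k) ≤ 4096 * areaM.real (topHalf n k) := by
  have hvol := Measure.addHaar_le_of_subset_ball_of_ball_subset volume (by positivity)
    (carlesonBox_subset_ball n k) (ball_subset_topHalf n k)
  have hratio : ((8 : ℝ) / 2 ^ n / (1 / 2 ^ n / 8)) ^ Module.finrank ℝ ℂ = 4096 := by
    rw [Complex.finrank_real_complex]; field_simp; norm_num
  rw [hratio] at hvol
  have : areaM (carlesonBox n k) ≤ 4096 * areaM (topHalf n k) := by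
    rw [areaM_apply_of_subset (carlesonBox_subset_ball_zero_one n k),
      areaM_apply_of_subset (topHalf_subset_ball_zero_one n k), mul_left_comm]
    gcongr
    simpa using hvol
  simpa [measureReal_def] using ENNReal.toReal_mono (by finiteness) this

lemma areaM_topHalf_ne_zero (n k : ℕ) : areaM (topHalf n k) ≠ 0 := by
  refine (lt_of_lt_of_le ?_ (measure_mono (ball_subset_topHalf n k))).ne'
  rw [areaM_apply_of_subset
    ((ball_subset_topHalf n k).trans (topHalf_subset_ball_zero_one n k))]
  exact ENNReal.mul_pos (by simp) (measure_ball_pos volume _ (by positivity)).ne'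

/-- Dimension-free sufficiency in the dyadic Carleson embedding: if the operator-valued
measure `μ` has Carleson intensity at most `c`, then the dyadic Bergman embedding
quadratic form of `f` is bounded by `C c ∫ ‖f‖² dA`, with `C` absolute. -/
theorem dyadic_embedding_of_carleson_intensity :
    ∃ C : ℝ, 0 < C ∧
      ∀ (H : Type) [NormedAddCommGroup H] [InnerProductSpace ℂ H] [CompleteSpace H]
        (μ : Set ℂ → H →L[ℂ] H),
        (∀ s : Set ℂ, (μ s).IsPositive) →
        (∀ s : ℕ → Set ℂ, (∀ i, MeasurableSet (s i)) → Pairwise (Function.onFun Disjoint s) →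
          ∀ e : H, HasSum (fun i => μ (s i) e) (μ (⋃ i, s i) e)) →
        ∀ c : ℝ, 0 ≤ c →
        (∀ n k : ℕ, k < 2 ^ n →
          ‖μ (carlesonBox n k)‖ ≤ c * (areaM (carlesonBox n k)).toReal) →
        ∀ f : ℂ → H, MemLp f 2 areaM →
        ∑' p : (Σ n : ℕ, Fin (2 ^ n)),
          (μ (topHalf p.1 p.2)).reApplyInnerSelf
            ((areaM (topHalf p.1 p.2)).toReal⁻¹ • ∫ z in topHalf p.1 p.2, f z ∂areaM) ≤
          C * c * ∫ z, ‖f z‖ ^ 2 ∂areaM := by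
  refine ⟨4096, by norm_num, fun H _ _ _ μ hpos hμ c hc hcarleson f hf => ?_⟩
  refine tsum_le_mul_integral_of_le_mul_setIntegral (fun p => measurableSet_topHalf _ _)
    pairwise_disjoint_topHalf hf.integrable_norm_pow' (fun _ => by positivity) (by positivity)
    fun ⟨n, k⟩ => ?_
  rw [← measureReal_def, ← setAverage_eq]
  exact reApplyInnerSelf_setAverage_le hμ hpos (measurableSet_topHalf n k)
    (measurableSet_carlesonBox n k) (fun _ hz => hz.1) hc (hcarleson n k k.isLt)
    (areaM_carlesonBox_le n k) (areaM_topHalf_ne_zero n k) (measure_ne_top _ _) (hf.restrict _)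
end
end

section
/- Converse to sup-norm extraction: let F : 𝔻 → B(H) be measurable and W an operator weight whose averages satisfy k₁[W]_{λ,r} ≤ [W]_{z,r} ≤ k₂[W]_{λ,r} whenever z ∈ D_{λ,r}. If sup_λ (1−|λ|) ‖[W]^{1/2}_{λ,r} F(λ) [W]^{−1/2}_{λ,r}‖ < ∞, then there is C with ∫_{D_{λ,r}} ‖[W]^{1/2}_{λ,r} F(z) [W]^{−1/2}_{λ,r} e‖² dA(z) ≤ C‖e‖² for all e ∈ H and λ ∈ 𝔻. -/
/-! For `z ∈ D_{λ,r}` the comparability of the averages makes the norms `‖[W]^{1/2}_{λ,r} x‖²` and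
`‖[W]^{1/2}_{z,r} x‖²` comparable, so conjugating `F(z)` by `[W]^{1/2}_{λ,r}` instead of
`[W]^{1/2}_{z,r}` costs at most the factor `k₂/k₁`. The sup hypothesis at `z` then bounds the
integrand by `(k₂/k₁) (M / (1-|z|))² ‖e‖²`. On `D_{λ,r}` we have `1-|z| > (1-r)(1-|λ|)`, and the
disc has normalized area at most `r²(1-|λ|)²`, so the integral is at most
`(k₂/k₁) M² r² / (1-r)² ‖e‖²`, uniformly in `λ`. -/

open MeasureTheory Metric Complex Set
open scoped ENNReal NNReal InnerProductSpace

noncomputable section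

theorem LinearMap.IsSymmetric.reApplyInnerSelf_comp_self {𝕜 E : Type*} [RCLike 𝕜]
    [NormedAddCommGroup E] [InnerProductSpace 𝕜 E] {S : E →L[𝕜] E}
    (hS : (S : E →ₗ[𝕜] E).IsSymmetric) (x : E) :
    (S ∘L S).reApplyInnerSelf x = ‖S x‖ ^ 2 := by
  rw [ContinuousLinearMap.reApplyInnerSelf_apply, ContinuousLinearMap.comp_apply,
    ← ContinuousLinearMap.coe_coe, hS, ContinuousLinearMap.coe_coe, inner_self_eq_norm_sq]

theorem norm_sq_conj_apply_le {𝕜 E : Type*} [NontriviallyNormedField 𝕜] [NormedAddCommGroup E]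
    [NormedSpace 𝕜 E] {S S' Sinv S'inv : E →L[𝕜] E} (hS : S ∘L Sinv = 1) (hS' : S'inv ∘L S' = 1)
    {k₁ k₂ : ℝ} (h₁ : ∀ x, k₁ * ‖S x‖ ^ 2 ≤ ‖S' x‖ ^ 2) (h₂ : ∀ x, ‖S' x‖ ^ 2 ≤ k₂ * ‖S x‖ ^ 2)
    (T : E →L[𝕜] E) (e : E) :
    k₁ * ‖(S ∘L T ∘L Sinv) e‖ ^ 2 ≤ k₂ * ‖S' ∘L T ∘L S'inv‖ ^ 2 * ‖e‖ ^ 2 := by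
  set y := Sinv e
  have hy : S y = e := DFunLike.congr_fun hS e
  have hS'y : S' (T y) = (S' ∘L T ∘L S'inv) (S' y) := by
    have hy' : S'inv (S' y) = y := DFunLike.congr_fun hS' y
    simp only [ContinuousLinearMap.comp_apply, hy']
  calc k₁ * ‖(S ∘L T ∘L Sinv) e‖ ^ 2 ≤ ‖S' (T y)‖ ^ 2 := h₁ (T y)
    _ ≤ (‖S' ∘L T ∘L S'inv‖ * ‖S' y‖) ^ 2 := by
      rw [hS'y]; gcongr; exact ContinuousLinearMap.le_opNorm _ _
    _ ≤ ‖S' ∘L T ∘L S'inv‖ ^ 2 * (k₂ * ‖e‖ ^ 2) := by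
      rw [mul_pow, ← hy]; gcongr; exact h₂ y
    _ = k₂ * ‖S' ∘L T ∘L S'inv‖ ^ 2 * ‖e‖ ^ 2 := by ring

theorem one_sub_mul_one_sub_norm_lt_of_mem_discAt {lam z : ℂ} {r : ℝ} (hz : z ∈ discAt lam r) :
    (1 - r) * (1 - ‖lam‖) < 1 - ‖z‖ := by
  have := norm_le_norm_add_norm_sub' z lam
  linarith [hz.2]

theorem le_div_of_one_sub_norm_mul_le_of_mem_discAt {lam z : ℂ} {r M a : ℝ} (hr1 : r < 1)
    (hlam : ‖lam‖ < 1) (hz : z ∈ discAt lam r) (ha : 0 ≤ a) (h : (1 - ‖z‖) * a ≤ M) :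
    a ≤ M / ((1 - r) * (1 - ‖lam‖)) := by
  rw [le_div_iff₀' (mul_pos (by linarith) (by linarith))]
  calc _ ≤ (1 - ‖z‖) * a := by gcongr; exact (one_sub_mul_one_sub_norm_lt_of_mem_discAt hz).le
    _ ≤ M := h

instance inst_s16 : IsFiniteMeasure areaM :=
  ⟨by
    rw [areaM, Measure.smul_apply, Measure.restrict_apply_univ, smul_eq_mul]
    exact ENNReal.mul_lt_top (ENNReal.inv_lt_top.2 (by simp [Real.pi_pos])) measure_ball_lt_top⟩

theorem areaM_ball_le (c : ℂ) (R : ℝ) : areaM (ball c R) ≤ ENNReal.ofReal R ^ 2 := by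
  have hπ : ENNReal.ofReal Real.pi ≠ 0 := by simp [Real.pi_pos]
  calc areaM (ball c R) ≤ (ENNReal.ofReal Real.pi)⁻¹ * volume (ball c R) := by
        rw [areaM, Measure.smul_apply, smul_eq_mul]
        gcongr
        exact Measure.restrict_le_self
    _ = ENNReal.ofReal R ^ 2 := by
        rw [Complex.volume_ball, ← ENNReal.ofReal_coe_nnreal, NNReal.coe_real_pi, mul_comm,
          mul_assoc, ENNReal.mul_inv_cancel hπ ENNReal.ofReal_ne_top, mul_one]

theorem areaM_real_discAt_le {lam : ℂ} {r : ℝ} (hr : 0 ≤ r) (hlam : ‖lam‖ ≤ 1) :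
    areaM.real (discAt lam r) ≤ (r * (1 - ‖lam‖)) ^ 2 := by
  have hR : 0 ≤ r * (1 - ‖lam‖) := mul_nonneg hr (by linarith)
  have hsub : discAt lam r ⊆ ball lam (r * (1 - ‖lam‖)) := fun z hz ↦ by
    simpa [dist_eq_norm] using hz.2
  rw [measureReal_def]
  refine ENNReal.toReal_le_of_le_ofReal (by positivity) ?_
  rw [ENNReal.ofReal_pow hR]
  exact (measure_mono hsub).trans (areaM_ball_le _ _)

theorem conjugated_integral_bound_of_sup_general
    (H : Type*) [NormedAddCommGroup H] [InnerProductSpace ℂ H]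
    (F : ℂ → H →L[ℂ] H) (r : ℝ) (hr : 0 < r) (hr1 : r < 1)
    -- `Wav λ = [W]_{λ,r}`, with square root `Ws λ` and its inverse `Wsinv λ`
    (Wav Ws Wsinv : ℂ → H →L[ℂ] H)
    (hWs : ∀ lam : ℂ, ‖lam‖ < 1 → (Ws lam).IsPositive ∧ Ws lam ∘L Ws lam = Wav lam)
    (hWsinv : ∀ lam : ℂ, ‖lam‖ < 1 →
      Ws lam ∘L Wsinv lam = 1 ∧ Wsinv lam ∘L Ws lam = 1)
    -- comparability of the averages on `D_{λ,r}`
    (k₁ k₂ : ℝ) (hk₁ : 0 < k₁) (hk₂ : 0 < k₂)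
    (hcomp : ∀ lam z : ℂ, ‖lam‖ < 1 → z ∈ discAt lam r → ∀ e : H,
      k₁ * (Wav lam).reApplyInnerSelf e ≤ (Wav z).reApplyInnerSelf e ∧
      (Wav z).reApplyInnerSelf e ≤ k₂ * (Wav lam).reApplyInnerSelf e)
    -- the sup-norm hypothesis
    (M : ℝ)
    (hsup : ∀ lam : ℂ, ‖lam‖ < 1 →
      (1 - ‖lam‖) * ‖Ws lam ∘L F lam ∘L Wsinv lam‖ ≤ M) :
    ∃ C : ℝ, ∀ (e : H) (lam : ℂ), ‖lam‖ < 1 →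
      ∫ z in discAt lam r, ‖(Ws lam ∘L F z ∘L Wsinv lam) e‖ ^ 2 ∂areaM ≤ C * ‖e‖ ^ 2 := by
  have hWs_sq : ∀ w : ℂ, ‖w‖ < 1 → ∀ x, ‖Ws w x‖ ^ 2 = (Wav w).reApplyInnerSelf x :=
    fun w hw x ↦ by rw [← (hWs w hw).2, (hWs w hw).1.isSymmetric.reApplyInnerSelf_comp_self]
  refine ⟨k₂ / k₁ * M ^ 2 * r ^ 2 / (1 - r) ^ 2, fun e lam hlam ↦ ?_⟩
  have hL : 0 < 1 - ‖lam‖ := by linarith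
  set K := k₂ / k₁ * (M / ((1 - r) * (1 - ‖lam‖))) ^ 2 * ‖e‖ ^ 2 with hK
  have hpt : ∀ z ∈ discAt lam r, ‖‖(Ws lam ∘L F z ∘L Wsinv lam) e‖ ^ 2‖ ≤ K := by
    intro z hz
    have hz1 : ‖z‖ < 1 := hz.1
    have hTz : ‖Ws z ∘L F z ∘L Wsinv z‖ ≤ M / ((1 - r) * (1 - ‖lam‖)) :=
      le_div_of_one_sub_norm_mul_le_of_mem_discAt hr1 hlam hz (norm_nonneg _) (hsup z hz1)
    have hconj := norm_sq_conj_apply_le (hWsinv lam hlam).1 (hWsinv z hz1).2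
      (fun x ↦ by simpa only [hWs_sq lam hlam, hWs_sq z hz1] using (hcomp lam z hlam hz x).1)
      (fun x ↦ by simpa only [hWs_sq lam hlam, hWs_sq z hz1] using (hcomp lam z hlam hz x).2)
      (F z) e
    rw [norm_pow, norm_norm, hK, div_mul_eq_mul_div, div_mul_eq_mul_div, le_div_iff₀' hk₁]
    refine hconj.trans ?_
    gcongr
  calc ∫ z in discAt lam r, ‖(Ws lam ∘L F z ∘L Wsinv lam) e‖ ^ 2 ∂areaM
      ≤ K * areaM.real (discAt lam r) :=
        (Real.le_norm_self _).trans (norm_setIntegral_le_of_norm_le_const (measure_lt_top _ _) hpt)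
    _ ≤ K * (r * (1 - ‖lam‖)) ^ 2 := by gcongr; exact areaM_real_discAt_le hr.le hlam.le
    _ = k₂ / k₁ * M ^ 2 * r ^ 2 / (1 - r) ^ 2 * ‖e‖ ^ 2 := by
        rw [hK]; field_simp

/-- Converse to the sup-norm extraction, for the weighted conjugation
`[W]^{1/2}_{λ,r} F(z) [W]^{−1/2}_{λ,r}`, using the comparability of the averages. -/
theorem conjugated_integral_bound_of_sup
    (H : Type*) [NormedAddCommGroup H] [InnerProductSpace ℂ H] [CompleteSpace H]
    (F : ℂ → H →L[ℂ] H) (hF : Measurable F) (r : ℝ) (hr : 0 < r) (hr1 : r < 1)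
    -- `Wav λ = [W]_{λ,r}`, with square root `Ws λ` and its inverse `Wsinv λ`
    (Wav Ws Wsinv : ℂ → H →L[ℂ] H)
    (hWs : ∀ lam : ℂ, ‖lam‖ < 1 → (Ws lam).IsPositive ∧ Ws lam ∘L Ws lam = Wav lam)
    (hWsinv : ∀ lam : ℂ, ‖lam‖ < 1 →
      Ws lam ∘L Wsinv lam = 1 ∧ Wsinv lam ∘L Ws lam = 1)
    -- comparability of the averages on `D_{λ,r}`
    (k₁ k₂ : ℝ) (hk₁ : 0 < k₁) (hk₂ : 0 < k₂)
    (hcomp : ∀ lam z : ℂ, ‖lam‖ < 1 → z ∈ discAt lam r → ∀ e : H,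
      k₁ * (Wav lam).reApplyInnerSelf e ≤ (Wav z).reApplyInnerSelf e ∧
      (Wav z).reApplyInnerSelf e ≤ k₂ * (Wav lam).reApplyInnerSelf e)
    -- the sup-norm hypothesis
    (M : ℝ)
    (hsup : ∀ lam : ℂ, ‖lam‖ < 1 →
      (1 - ‖lam‖) * ‖Ws lam ∘L F lam ∘L Wsinv lam‖ ≤ M) :
    ∃ C : ℝ, ∀ (e : H) (lam : ℂ), ‖lam‖ < 1 →
      ∫ z in discAt lam r, ‖(Ws lam ∘L F z ∘L Wsinv lam) e‖ ^ 2 ∂areaM ≤ C * ‖e‖ ^ 2 :=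
  conjugated_integral_bound_of_sup_general H F r hr hr1 Wav Ws Wsinv hWs hWsinv k₁ k₂ hk₁ hk₂ hcomp
    M hsup
end
end
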